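/- Set β = γ = λ = 1. Place chargers at c_1 = (0,0) and c_2 = (2,0), and a receiver at r' = (5/4, 0). Then the power received at r' with both chargers fully operational is ‖E(c_1, r') + E(c_2, r')‖² = (8/15)² = 64/225, which is strictly less than min{‖E(c_1, r')‖², ‖E(c_2, r')‖²} = (4/5)² = 16/25; that is, operating both chargers yields strictly less power at r' than operating only the weaker single charger (the cancellation effect). -/
import Mathlib


/-- The electric field created at receiver position `r` by a fully operational charger
at position `c`: `E(c, r) = (β/d)·(cos(2πd/λ), sin(2πd/λ))` where `d = ‖c - r‖`. -/
noncomputable def Efield (β lam : ℝ) (c r : EuclideanSpace ℝ (Fin 2)) :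
    EuclideanSpace ℝ (Fin 2) :=
  (β / ‖c - r‖) • (WithLp.equiv 2 (Fin 2 → ℝ)).symm
    ![Real.cos (2 * Real.pi * ‖c - r‖ / lam), Real.sin (2 * Real.pi * ‖c - r‖ / lam)]

/-- Charger 1 at `(0,0)`. -/
noncomputable def c1 : EuclideanSpace ℝ (Fin 2) := (WithLp.equiv 2 (Fin 2 → ℝ)).symm ![0, 0]
/-- Charger 2 at `(2,0)`. -/
noncomputable def c2 : EuclideanSpace ℝ (Fin 2) := (WithLp.equiv 2 (Fin 2 → ℝ)).symm ![2, 0]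
/-- Receiver at `(5/4, 0)`. -/
noncomputable def r' : EuclideanSpace ℝ (Fin 2) :=
  (WithLp.equiv 2 (Fin 2 → ℝ)).symm ![(5/4 : ℝ), 0]

lemma nd1 : ‖c1 - r'‖ = 5/4 := by
  simp [c1, r', EuclideanSpace.norm_eq, Fin.sum_univ_two]
  rw [Real.sqrt_sq (by norm_num)]

lemma nd2 : ‖c2 - r'‖ = 3/4 := by
  simp [c2, r', EuclideanSpace.norm_eq, Fin.sum_univ_two]
  rw [show (2-(5:ℝ)/4)^2 = (3/4)^2 by norm_num, Real.sqrt_sq (by norm_num)]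

lemma cos1 : Real.cos (2 * Real.pi * (5/4) / 1) = 0 := by
  rw [show 2 * Real.pi * (5/4) / 1 = Real.pi/2 + 2*Real.pi by ring,
    Real.cos_add_two_pi, Real.cos_pi_div_two]

lemma sin1 : Real.sin (2 * Real.pi * (5/4) / 1) = 1 := by
  rw [show 2 * Real.pi * (5/4) / 1 = Real.pi/2 + 2*Real.pi by ring,
    Real.sin_add_two_pi, Real.sin_pi_div_two]

lemma cos2 : Real.cos (2 * Real.pi * (3/4) / 1) = 0 := by
  rw [show 2 * Real.pi * (3/4) / 1 = Real.pi + Real.pi/2 by ring]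
  simp [Real.cos_add]

lemma sin2 : Real.sin (2 * Real.pi * (3/4) / 1) = -1 := by
  rw [show 2 * Real.pi * (3/4) / 1 = Real.pi + Real.pi/2 by ring]
  simp [Real.sin_add]

lemma E1 : Efield 1 1 c1 r' = (WithLp.equiv 2 (Fin 2 → ℝ)).symm ![0, 4/5] := by
  rw [Efield, nd1, cos1, sin1]
  ext i
  fin_cases i <;> simp <;> norm_num

lemma E2 : Efield 1 1 c2 r' = (WithLp.equiv 2 (Fin 2 → ℝ)).symm ![0, -4/3] := by
  rw [Efield, nd2, cos2, sin2]
  ext i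
  fin_cases i <;> simp <;> norm_num

/-- The cancellation effect (β = γ = λ = 1): with both chargers on, the receiver at
`(5/4, 0)` gets power `(8/15)² = 64/225`, strictly less than the smaller of the two
single-charger powers, `(4/5)² = 16/25`. -/
theorem stmt13 :
    ‖Efield 1 1 c1 r' + Efield 1 1 c2 r'‖ ^ 2 = 64 / 225 ∧
    min (‖Efield 1 1 c1 r'‖ ^ 2) (‖Efield 1 1 c2 r'‖ ^ 2) = 16 / 25 ∧
    ‖Efield 1 1 c1 r' + Efield 1 1 c2 r'‖ ^ 2 <
      min (‖Efield 1 1 c1 r'‖ ^ 2) (‖Efield 1 1 c2 r'‖ ^ 2) := by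
  rw [E1, E2]
  have h1 : ‖(WithLp.equiv 2 (Fin 2 → ℝ)).symm ![(0:ℝ), 4/5] +
      (WithLp.equiv 2 (Fin 2 → ℝ)).symm ![(0:ℝ), -4/3]‖ = 8/15 := by
    simp [EuclideanSpace.norm_eq, Fin.sum_univ_two]
    rw [show ((4:ℝ)/5 + -4/3)^2 = (8/15)^2 by norm_num, Real.sqrt_sq (by norm_num)]
  have h2 : ‖(WithLp.equiv 2 (Fin 2 → ℝ)).symm ![(0:ℝ), 4/5]‖ = 4/5 := by
    simp [EuclideanSpace.norm_eq, Fin.sum_univ_two]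
    rw [Real.sqrt_sq (by norm_num)]
  have h3 : ‖(WithLp.equiv 2 (Fin 2 → ℝ)).symm ![(0:ℝ), -4/3]‖ = 4/3 := by
    simp [EuclideanSpace.norm_eq, Fin.sum_univ_two]
    rw [show (-(4:ℝ)/3)^2 = (4/3)^2 by ring, Real.sqrt_sq (by norm_num)]
  rw [h1, h2, h3]
  norm_num
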